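/- arXiv:0710.4269 — 2 statements merged into one kernel-verified Lean document; each statement's English description precedes it below -/
import Mathlib

section
/- Under the positivity assumptions on the parameters H, r_endo, r_exo, r_M, r_LM, the symmetric matrix M (as defined for the EWG steady-state equation) is negative definite; in particular, by Gershgorin's theorem all its eigenvalues lie in the disk centered at −d+h with radius 2r_LM + r_M + 3h and have strictly negative real part. -/
open Matrix

/-- Diagonal block `E = E₀ + h·J` of the EWG steady-state matrix. -/
def Eblk (d h rM rLM : ℝ) : Matrix (Fin 4) (Fin 4) ℝ :=
  !![-d + h, rLM + h, rM + h, rLM + h;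
     rLM + h, -d + h, rLM + h, h;
     rM + h, rLM + h, -d + h, rLM + h;
     rLM + h, h, rLM + h, -d + h]

/-- Off-diagonal coupling block with single entry `r_M` at position (2,4). -/
def F24blk (rM : ℝ) : Matrix (Fin 4) (Fin 4) ℝ :=
  !![0, 0, 0, 0;
     0, 0, 0, rM;
     0, 0, 0, 0;
     0, 0, 0, 0]

/-- `F₄₂ = F₂₄ᵀ`. -/
def F42blk (rM : ℝ) : Matrix (Fin 4) (Fin 4) ℝ := (F24blk rM)ᵀ

/-- The 16×16 block-circulant matrix `M` of the EWG steady-state equation. -/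
def Mmat (d h rM rLM : ℝ) : Matrix (Fin 4 × Fin 4) (Fin 4 × Fin 4) ℝ :=
  fun p q =>
    if q.1 = p.1 then Eblk d h rM rLM p.2 q.2
    else if q.1 = p.1 + 1 then F24blk rM p.2 q.2
    else if q.1 = p.1 + 3 then F42blk rM p.2 q.2
    else 0

/-!
Every row of `M` has diagonal entry `-d + h` and off-diagonal absolute sum `2 r_LM + r_M + 3 h`,
which is `< d - h` because `4 h < r_endo`. Gershgorin's theorem therefore puts every eigenvalue in
a disc contained in the open left half-plane; as `M` is symmetric its eigenvalues are real, so
those of `-M` are positive and `-M` is positive definite.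
-/

open Finset

section Gershgorin

variable {n : Type*} [Fintype n] [DecidableEq n]

theorem exists_norm_sub_diag_le_of_mem_spectrum {K : Type*} [NormedField K] {A : Matrix n n K}
    {μ : K} (hμ : μ ∈ spectrum K A) : ∃ k, ‖μ - A k k‖ ≤ ∑ j ∈ univ.erase k, ‖A k j‖ := by
  rw [← spectrum_toLin', ← Module.End.hasEigenvalue_iff_mem_spectrum] at hμ
  simpa only [Metric.mem_closedBall, dist_eq_norm] using eigenvalue_mem_ball hμ

theorem posDef_of_sum_abs_lt_diag {A : Matrix n n ℝ} (hA : A.IsSymm)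
    (hdom : ∀ i, ∑ j ∈ univ.erase i, |A i j| < A i i) : A.PosDef := by
  have hAh : A.IsHermitian := isHermitian_iff_isSymm.mpr hA
  refine hAh.posDef_iff_eigenvalues_pos.mpr fun i => ?_
  obtain ⟨k, hk⟩ :=
    exists_norm_sub_diag_le_of_mem_spectrum (hAh.eigenvalues_mem_spectrum_real i)
  simp only [Real.norm_eq_abs] at hk
  linarith [neg_abs_le (hAh.eigenvalues i - A k k), hdom k]

theorem norm_sub_le_of_mem_spectrum_map {K : Type*} [RCLike K] {A : Matrix n n ℝ} {c r : ℝ}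
    (hdiag : ∀ i, A i i = c) (hrow : ∀ i, ∑ j ∈ univ.erase i, |A i j| ≤ r) {μ : K}
    (hμ : μ ∈ spectrum K (A.map (algebraMap ℝ K))) : ‖μ - c‖ ≤ r := by
  obtain ⟨k, hk⟩ := exists_norm_sub_diag_le_of_mem_spectrum hμ
  simp only [map_apply, hdiag, RCLike.algebraMap_eq_ofReal, RCLike.norm_ofReal] at hk
  exact hk.trans (hrow k)

end Gershgorin

section EWG

variable (d h rM rLM : ℝ)

theorem Mmat_isSymm : (Mmat d h rM rLM).IsSymm := by
  have hE : (Eblk d h rM rLM).IsSymm := by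
    ext b e; fin_cases b <;> fin_cases e <;> simp [Eblk]
  ext ⟨a, b⟩ ⟨c, e⟩
  fin_cases a <;> fin_cases c <;> simp [Mmat, hE.apply, F42blk, transpose_apply]

theorem Mmat_diag (k : Fin 4 × Fin 4) : Mmat d h rM rLM k k = -d + h := by
  obtain ⟨a, b⟩ := k
  fin_cases b <;> simp [Mmat, Eblk]

theorem Mmat_sum_abs_offDiag (hh : 0 ≤ h) (hrM : 0 ≤ rM) (hrLM : 0 ≤ rLM)
    (i : Fin 4 × Fin 4) :
    ∑ j ∈ univ.erase i, |Mmat d h rM rLM i j| = 2 * rLM + rM + 3 * h := by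
  have hF42 : F42blk rM = !![0, 0, 0, 0; 0, 0, 0, 0; 0, 0, 0, 0; 0, rM, 0, 0] := by
    ext i j; fin_cases i <;> fin_cases j <;> simp [F42blk, F24blk]
  obtain ⟨a, b⟩ := i
  rw [sum_erase_eq_sub (mem_univ _)]
  fin_cases a <;> fin_cases b <;>
    simp [Fintype.sum_prod_type, Fin.sum_univ_four, Mmat, Eblk, F24blk, hF42, abs_of_nonneg, hh,
      hrM, hrLM, add_nonneg] <;> ring

end EWG

theorem Mmat_negDef_gershgorin (H rendo rexo rM rLM d h : ℝ)
    (hH : 0 < H) (hrendo : 0 < rendo) (hrexo : 0 < rexo)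
    (hrM : 0 < rM) (hrLM : 0 < rLM)
    (hd : d = H⁻¹ + rendo + rM + 2 * rLM)
    (hh : h = (1 / 4) * (H * rexo / (1 + H * rexo)) * rendo) :
    (Mmat d h rM rLM).IsSymm ∧
    (-(Mmat d h rM rLM)).PosDef ∧
    ∀ μ ∈ spectrum ℂ ((Mmat d h rM rLM).map (algebraMap ℝ ℂ)),
      ‖μ - ((-d + h : ℝ) : ℂ)‖ ≤ 2 * rLM + rM + 3 * h ∧ μ.re < 0 := by
  have hh0 : 0 < h := by rw [hh]; positivity
  have hh4 : 4 * h < rendo := by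
    have hq : H * rexo / (1 + H * rexo) < 1 := by rw [div_lt_one (by positivity)]; linarith
    rw [hh]; nlinarith
  have hdom : 2 * rLM + rM + 3 * h < d - h := by rw [hd]; linarith [inv_pos.mpr hH]
  have hrow := Mmat_sum_abs_offDiag d h rM rLM hh0.le hrM.le hrLM.le
  refine ⟨Mmat_isSymm .., ?_, fun μ hμ => ?_⟩
  · refine posDef_of_sum_abs_lt_diag (Mmat_isSymm ..).neg fun i => ?_
    simp only [Matrix.neg_apply, abs_neg, hrow, Mmat_diag]
    linarith
  · have hball : ‖μ - ((-d + h : ℝ) : ℂ)‖ ≤ 2 * rLM + rM + 3 * h :=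
      norm_sub_le_of_mem_spectrum_map (Mmat_diag d h rM rLM) (fun i => (hrow i).le) hμ
    have hre := Complex.re_le_norm (μ - ((-d + h : ℝ) : ℂ))
    rw [Complex.sub_re, Complex.ofReal_re] at hre
    exact ⟨hball, by linarith⟩
end

section
/- (Theorem: EWG symmetry) In the steady-state Wingless system with wg = (0, w, 0, 0), w > 0, and positive parameters, the total external Wingless presented to each cell satisfies EWG_4 < EWG_1 = EWG_3 < EWG_2, where EWG_i denotes the sum of neighboring-face concentrations. Concretely, with E-variables satisfying equations (E11)–(E42) and A = d − r_M − 2h > B = 2(r_LM+h) > 0, d > r_M, one has 2E₄₁ + 2E₁₄ < 2E₁₁ + E₂₂ + E₄₂ < 2E₂₁ + 2E₁₂. -/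
set_option maxHeartbeats 1000000


/-- EWG symmetry theorem: with `wg = (0,w,0,0)`, `w > 0`, at steady state
`EWG₄ < EWG₁ = EWG₃ < EWG₂`. -/
theorem EWG_symmetry
    (H rendo rexo rM rLM d h wbar : ℝ)
    (E11 E12 E14 E21 E22 E41 E42 : ℝ)
    (hH : 0 < H) (hrendo : 0 < rendo) (hrexo : 0 < rexo)
    (hrM : 0 < rM) (hrLM : 0 < rLM) (hw : 0 < wbar)
    (hd : d = H⁻¹ + rendo + rM + 2 * rLM)
    (hh : h = (1 / 4) * (H * rexo / (1 + H * rexo)) * rendo)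
    (hAB : d - rM - 2 * h > 2 * (rLM + h))
    (hBpos : 0 < 2 * (rLM + h))
    (hdrM : d > rM)
    (hpos11 : 0 < E11) (hpos12 : 0 < E12) (hpos14 : 0 < E14)
    (hpos21 : 0 < E21) (hpos22 : 0 < E22) (hpos41 : 0 < E41) (hpos42 : 0 < E42)
    (heq11 : -(d - rM - 2 * h) * E11 + (rLM + h) * E12 + (rLM + h) * E14 = 0)
    (heq12 : 2 * (rLM + h) * E11 - (d - h) * E12 + h * E14 + rM * E22 = 0)
    (heq14 : 2 * (rLM + h) * E11 + h * E12 - (d - h) * E14 + rM * E42 = 0)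
    (heq21 : -(d - rM - 2 * h) * E21 + 2 * (rLM + h) * E22 = -wbar)
    (heq22 : 2 * (rLM + h) * E21 - (d - 2 * h) * E22 + rM * E12 = -wbar)
    (heq41 : -(d - rM - 2 * h) * E41 + 2 * (rLM + h) * E42 = 0)
    (heq42 : 2 * (rLM + h) * E41 - (d - 2 * h) * E42 + rM * E14 = 0) :
    2 * E41 + 2 * E14 < 2 * E11 + E22 + E42 ∧
    2 * E11 + E22 + E42 < 2 * E21 + 2 * E12 := by
  have hApos : 0 < (d - rM - 2*h) := lt_trans hBpos hAB
  have hBpos' : 0 < (2*rLM + 2*h) := by linarith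
  have hABm : 0 < (d - rM - 2*h) - (2*rLM + 2*h) := by linarith
  have hABp : 0 < (d - rM - 2*h) + (2*rLM + 2*h) := by linarith
  have hdpos : 0 < d := lt_trans hrM hdrM
  have hA2B2 : 0 < (d - rM - 2*h)^2 - (2*rLM + 2*h)^2 := by nlinarith [mul_pos hABm hABp]
  have hCpos : 0 < ((d - rM - 2*h)*(d - 2*h) - (2*rLM + 2*h)^2) := by nlinarith [hA2B2, mul_pos hApos hrM]
  have hEpos : 0 < (d - rM - 2*h)^2 - (2*rLM + 2*h)^2 + 2*(d - rM - 2*h)*rM := by nlinarith [hA2B2, mul_pos hApos hrM]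
  have hD1pos : 0 < (((d - rM - 2*h) - (2*rLM + 2*h)) * ((d - rM - 2*h)^2 - (2*rLM + 2*h)^2 + 2*(d - rM - 2*h)*rM)) := mul_pos hABm hEpos
  have hD2pos : 0 < (d * ((d - rM - 2*h)*(d - 2*h) - (2*rLM + 2*h)^2) - (d - rM - 2*h) * rM^2) := by
    nlinarith [mul_pos hdpos hA2B2, mul_pos (mul_pos hApos hrM) (sub_pos.mpr hdrM)]
  -- sum equations
  have hQe : (d - rM - 2*h) * rM * (E22 + E42) = ((d - rM - 2*h)*(d - 2*h) - (2*rLM + 2*h)^2) * (E12 + E14) := by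
    linear_combination (d - rM - 2*h) * heq12 + (d - rM - 2*h) * heq14 + 2 * (2*rLM + 2*h) * heq11
  have h9 : -((d - rM - 2*h)*(d - 2*h) - (2*rLM + 2*h)^2) * (E22 + E42) + (d - rM - 2*h) * rM * (E12 + E14) = -((d - rM - 2*h) + (2*rLM + 2*h)) * wbar := by
    linear_combination (2*rLM + 2*h) * heq21 + (2*rLM + 2*h) * heq41 + (d - rM - 2*h) * heq22 + (d - rM - 2*h) * heq42
  have hS1' : ((d - rM - 2*h) + (2*rLM + 2*h)) * ((E12 + E14) * (((d - rM - 2*h) - (2*rLM + 2*h)) * ((d - rM - 2*h)^2 - (2*rLM + 2*h)^2 + 2*(d - rM - 2*h)*rM))) = ((d - rM - 2*h) + (2*rLM + 2*h)) * ((d - rM - 2*h) * rM * wbar) := by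
    linear_combination (-((d - rM - 2*h) * rM)) * h9 + (-((d - rM - 2*h)*(d - 2*h) - (2*rLM + 2*h)^2)) * hQe
  have hS1 : (E12 + E14) * (((d - rM - 2*h) - (2*rLM + 2*h)) * ((d - rM - 2*h)^2 - (2*rLM + 2*h)^2 + 2*(d - rM - 2*h)*rM)) = (d - rM - 2*h) * rM * wbar :=
    mul_left_cancel₀ (ne_of_gt hABp) hS1'
  have hQ1' : ((d - rM - 2*h) * rM) * ((E22 + E42) * (((d - rM - 2*h) - (2*rLM + 2*h)) * ((d - rM - 2*h)^2 - (2*rLM + 2*h)^2 + 2*(d - rM - 2*h)*rM))) = ((d - rM - 2*h) * rM) * (((d - rM - 2*h)*(d - 2*h) - (2*rLM + 2*h)^2) * wbar) := by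
    linear_combination (((d - rM - 2*h) - (2*rLM + 2*h)) * ((d - rM - 2*h)^2 - (2*rLM + 2*h)^2 + 2*(d - rM - 2*h)*rM)) * hQe + ((d - rM - 2*h)*(d - 2*h) - (2*rLM + 2*h)^2) * hS1
  have hQ1 : (E22 + E42) * (((d - rM - 2*h) - (2*rLM + 2*h)) * ((d - rM - 2*h)^2 - (2*rLM + 2*h)^2 + 2*(d - rM - 2*h)*rM)) = ((d - rM - 2*h)*(d - 2*h) - (2*rLM + 2*h)^2) * wbar :=
    mul_left_cancel₀ (ne_of_gt (mul_pos hApos hrM)) hQ1'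
  have hP1 : (E21 + E41) * ((d - rM - 2*h) * (((d - rM - 2*h) - (2*rLM + 2*h)) * ((d - rM - 2*h)^2 - (2*rLM + 2*h)^2 + 2*(d - rM - 2*h)*rM))) = ((2*rLM + 2*h) * ((d - rM - 2*h)*(d - 2*h) - (2*rLM + 2*h)^2) + (((d - rM - 2*h) - (2*rLM + 2*h)) * ((d - rM - 2*h)^2 - (2*rLM + 2*h)^2 + 2*(d - rM - 2*h)*rM))) * wbar := by
    linear_combination (-(((d - rM - 2*h) - (2*rLM + 2*h)) * ((d - rM - 2*h)^2 - (2*rLM + 2*h)^2 + 2*(d - rM - 2*h)*rM))) * heq21 + (-(((d - rM - 2*h) - (2*rLM + 2*h)) * ((d - rM - 2*h)^2 - (2*rLM + 2*h)^2 + 2*(d - rM - 2*h)*rM))) * heq41 + (2*rLM + 2*h) * hQ1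
  have hE11' : (d - rM - 2*h) * (2 * E11 * (((d - rM - 2*h) - (2*rLM + 2*h)) * ((d - rM - 2*h)^2 - (2*rLM + 2*h)^2 + 2*(d - rM - 2*h)*rM))) = (d - rM - 2*h) * ((2*rLM + 2*h) * rM * wbar) := by
    linear_combination (-2) * (((d - rM - 2*h) - (2*rLM + 2*h)) * ((d - rM - 2*h)^2 - (2*rLM + 2*h)^2 + 2*(d - rM - 2*h)*rM)) * heq11 + (2*rLM + 2*h) * hS1
  have hE11c : 2 * E11 * (((d - rM - 2*h) - (2*rLM + 2*h)) * ((d - rM - 2*h)^2 - (2*rLM + 2*h)^2 + 2*(d - rM - 2*h)*rM)) = (2*rLM + 2*h) * rM * wbar :=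
    mul_left_cancel₀ (ne_of_gt hApos) hE11'
  -- difference equations
  have h8 : d * (E12 - E14) = rM * (E22 - E42) := by
    linear_combination heq14 - heq12
  have hF1 : (E22 - E42) * (d * ((d - rM - 2*h)*(d - 2*h) - (2*rLM + 2*h)^2) - (d - rM - 2*h) * rM^2) = ((d - rM - 2*h) + (2*rLM + 2*h)) * d * wbar := by
    linear_combination (-((d - rM - 2*h) * d)) * heq22 + ((d - rM - 2*h) * d) * heq42 + ((d - rM - 2*h) * rM) * h8
      + (-(d * (2*rLM + 2*h))) * heq21 + (d * (2*rLM + 2*h)) * heq41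
  have hG1' : d * ((E12 - E14) * (d * ((d - rM - 2*h)*(d - 2*h) - (2*rLM + 2*h)^2) - (d - rM - 2*h) * rM^2)) = d * (((d - rM - 2*h) + (2*rLM + 2*h)) * rM * wbar) := by
    linear_combination (d * ((d - rM - 2*h)*(d - 2*h) - (2*rLM + 2*h)^2) - (d - rM - 2*h) * rM^2) * h8 + rM * hF1
  have hG1 : (E12 - E14) * (d * ((d - rM - 2*h)*(d - 2*h) - (2*rLM + 2*h)^2) - (d - rM - 2*h) * rM^2) = ((d - rM - 2*h) + (2*rLM + 2*h)) * rM * wbar :=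
    mul_left_cancel₀ (ne_of_gt hdpos) hG1'
  have hD1v : (E21 - E41) * ((d - rM - 2*h) * (d * ((d - rM - 2*h)*(d - 2*h) - (2*rLM + 2*h)^2) - (d - rM - 2*h) * rM^2)) = ((2*rLM + 2*h) * ((d - rM - 2*h) + (2*rLM + 2*h)) * d + (d * ((d - rM - 2*h)*(d - 2*h) - (2*rLM + 2*h)^2) - (d - rM - 2*h) * rM^2)) * wbar := by
    linear_combination (-(d * ((d - rM - 2*h)*(d - 2*h) - (2*rLM + 2*h)^2) - (d - rM - 2*h) * rM^2)) * heq21 + (d * ((d - rM - 2*h)*(d - 2*h) - (2*rLM + 2*h)^2) - (d - rM - 2*h) * rM^2) * heq41 + (2*rLM + 2*h) * hF1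
  -- key identities
  have key1 : (2 * E11 + E22 + E42 - (2 * E41 + 2 * E14)) * ((d - rM - 2*h) * (((d - rM - 2*h) - (2*rLM + 2*h)) * ((d - rM - 2*h)^2 - (2*rLM + 2*h)^2 + 2*(d - rM - 2*h)*rM)) * (d * ((d - rM - 2*h)*(d - 2*h) - (2*rLM + 2*h)^2) - (d - rM - 2*h) * rM^2))
      = wbar * (((d - rM - 2*h) + (2*rLM + 2*h)) * ((2*rLM + 2*h) * d + (d - rM - 2*h) * rM) * (((d - rM - 2*h) - (2*rLM + 2*h)) * ((d - rM - 2*h)^2 - (2*rLM + 2*h)^2 + 2*(d - rM - 2*h)*rM)) + ((d - rM - 2*h) - (2*rLM + 2*h)) * ((d - rM - 2*h)^2 - (2*rLM + 2*h)^2) * (d * ((d - rM - 2*h)*(d - 2*h) - (2*rLM + 2*h)^2) - (d - rM - 2*h) * rM^2)) := by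
    linear_combination ((d - rM - 2*h) * (d * ((d - rM - 2*h)*(d - 2*h) - (2*rLM + 2*h)^2) - (d - rM - 2*h) * rM^2)) * hE11c + ((d - rM - 2*h) * (d * ((d - rM - 2*h)*(d - 2*h) - (2*rLM + 2*h)^2) - (d - rM - 2*h) * rM^2)) * hQ1 - (d * ((d - rM - 2*h)*(d - 2*h) - (2*rLM + 2*h)^2) - (d - rM - 2*h) * rM^2) * hP1
      + (((d - rM - 2*h) - (2*rLM + 2*h)) * ((d - rM - 2*h)^2 - (2*rLM + 2*h)^2 + 2*(d - rM - 2*h)*rM)) * hD1v - ((d - rM - 2*h) * (d * ((d - rM - 2*h)*(d - 2*h) - (2*rLM + 2*h)^2) - (d - rM - 2*h) * rM^2)) * hS1 + ((d - rM - 2*h) * (((d - rM - 2*h) - (2*rLM + 2*h)) * ((d - rM - 2*h)^2 - (2*rLM + 2*h)^2 + 2*(d - rM - 2*h)*rM))) * hG1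
  have key2 : (2 * E21 + 2 * E12 - (2 * E11 + E22 + E42)) * ((d - rM - 2*h) * (((d - rM - 2*h) - (2*rLM + 2*h)) * ((d - rM - 2*h)^2 - (2*rLM + 2*h)^2 + 2*(d - rM - 2*h)*rM)) * (d * ((d - rM - 2*h)*(d - 2*h) - (2*rLM + 2*h)^2) - (d - rM - 2*h) * rM^2))
      = wbar * (2 * (d - rM - 2*h) * rM * ((d - rM - 2*h) - (2*rLM + 2*h)) * (d * ((d - rM - 2*h)*(d - 2*h) - (2*rLM + 2*h)^2) - (d - rM - 2*h) * rM^2) + ((d - rM - 2*h) + (2*rLM + 2*h)) * ((2*rLM + 2*h) * d + (d - rM - 2*h) * rM) * (((d - rM - 2*h) - (2*rLM + 2*h)) * ((d - rM - 2*h)^2 - (2*rLM + 2*h)^2 + 2*(d - rM - 2*h)*rM)) + (((d - rM - 2*h) - (2*rLM + 2*h)) * ((d - rM - 2*h)^2 - (2*rLM + 2*h)^2 + 2*(d - rM - 2*h)*rM)) * (d * ((d - rM - 2*h)*(d - 2*h) - (2*rLM + 2*h)^2) - (d - rM - 2*h) * rM^2)) := by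
    linear_combination (d * ((d - rM - 2*h)*(d - 2*h) - (2*rLM + 2*h)^2) - (d - rM - 2*h) * rM^2) * hP1 + (((d - rM - 2*h) - (2*rLM + 2*h)) * ((d - rM - 2*h)^2 - (2*rLM + 2*h)^2 + 2*(d - rM - 2*h)*rM)) * hD1v + ((d - rM - 2*h) * (d * ((d - rM - 2*h)*(d - 2*h) - (2*rLM + 2*h)^2) - (d - rM - 2*h) * rM^2)) * hS1 + ((d - rM - 2*h) * (((d - rM - 2*h) - (2*rLM + 2*h)) * ((d - rM - 2*h)^2 - (2*rLM + 2*h)^2 + 2*(d - rM - 2*h)*rM))) * hG1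
      - ((d - rM - 2*h) * (d * ((d - rM - 2*h)*(d - 2*h) - (2*rLM + 2*h)^2) - (d - rM - 2*h) * rM^2)) * hE11c - ((d - rM - 2*h) * (d * ((d - rM - 2*h)*(d - 2*h) - (2*rLM + 2*h)^2) - (d - rM - 2*h) * rM^2)) * hQ1
  have hK : 0 < (d - rM - 2*h) * (((d - rM - 2*h) - (2*rLM + 2*h)) * ((d - rM - 2*h)^2 - (2*rLM + 2*h)^2 + 2*(d - rM - 2*h)*rM)) * (d * ((d - rM - 2*h)*(d - 2*h) - (2*rLM + 2*h)^2) - (d - rM - 2*h) * rM^2) := mul_pos (mul_pos hApos hD1pos) hD2pos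
  have hBd : 0 < (2*rLM + 2*h) * d + (d - rM - 2*h) * rM := add_pos (mul_pos hBpos' hdpos) (mul_pos hApos hrM)
  have hR1 : 0 < wbar * (((d - rM - 2*h) + (2*rLM + 2*h)) * ((2*rLM + 2*h) * d + (d - rM - 2*h) * rM) * (((d - rM - 2*h) - (2*rLM + 2*h)) * ((d - rM - 2*h)^2 - (2*rLM + 2*h)^2 + 2*(d - rM - 2*h)*rM)) + ((d - rM - 2*h) - (2*rLM + 2*h)) * ((d - rM - 2*h)^2 - (2*rLM + 2*h)^2) * (d * ((d - rM - 2*h)*(d - 2*h) - (2*rLM + 2*h)^2) - (d - rM - 2*h) * rM^2)) :=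
    mul_pos hw (add_pos (mul_pos (mul_pos hABp hBd) hD1pos) (mul_pos (mul_pos hABm hA2B2) hD2pos))
  have hR2 : 0 < wbar * (2 * (d - rM - 2*h) * rM * ((d - rM - 2*h) - (2*rLM + 2*h)) * (d * ((d - rM - 2*h)*(d - 2*h) - (2*rLM + 2*h)^2) - (d - rM - 2*h) * rM^2) + ((d - rM - 2*h) + (2*rLM + 2*h)) * ((2*rLM + 2*h) * d + (d - rM - 2*h) * rM) * (((d - rM - 2*h) - (2*rLM + 2*h)) * ((d - rM - 2*h)^2 - (2*rLM + 2*h)^2 + 2*(d - rM - 2*h)*rM)) + (((d - rM - 2*h) - (2*rLM + 2*h)) * ((d - rM - 2*h)^2 - (2*rLM + 2*h)^2 + 2*(d - rM - 2*h)*rM)) * (d * ((d - rM - 2*h)*(d - 2*h) - (2*rLM + 2*h)^2) - (d - rM - 2*h) * rM^2)) :=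
    mul_pos hw (add_pos (add_pos
      (mul_pos (mul_pos (mul_pos (mul_pos two_pos hApos) hrM) hABm) hD2pos)
      (mul_pos (mul_pos hABp hBd) hD1pos)) (mul_pos hD1pos hD2pos))
  constructor
  · by_contra hc
    push_neg at hc
    have h0 := mul_le_mul_of_nonneg_right (sub_nonpos.mpr hc) (le_of_lt hK)
    rw [zero_mul, key1] at h0
    linarith
  · by_contra hc
    push_neg at hc
    have h0 := mul_le_mul_of_nonneg_right (sub_nonpos.mpr hc) (le_of_lt hK)
    rw [zero_mul, key2] at h0
    linarith
end
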